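/- Let M be a complete inner (length) metric space, p ∈ M, and ρ < inj_{M,p}. Then the open ball B(p, ρ) possesses radial uniqueness: every point q ∈ B(p, ρ) is joined to p by a unique geodesic, and this geodesic (parametrized proportionally to arclength by [0,1]) varies continuously with q in the uniform distance. -/

import Mathlib

/-!
Reparametrizing almost minimal curves by arclength gives constant-speed curves from `p` to `q`
whose lengths tend to `d(p,q)`. Below the injectivity radius these curves are uniformly Cauchy,
so by completeness they converge to a curve of speed at most `d(p,q)`, which is a geodesic; the
same property applied to two geodesics gives uniqueness. For continuity, the geodesic to a
nearby `q'` followed by a short curve from `q'` to `q` is an almost minimal curve to `q`, hence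
uniformly close to the geodesic to `q`, and by construction it stays close to the geodesic to `q'`.
-/

open Set Metric Filter Topology
open scoped ENNReal NNReal

noncomputable section

/-- Inverse hyperbolic cosine. -/
def arcosh (x : ℝ) : ℝ := Real.log (x + Real.sqrt (x ^ 2 - 1))

/-- `g` restricted to `[a,b]` is a unit-speed geodesic, i.e. an isometric embedding
of the interval `[a,b]`. -/
def IsUnitGeodesicOn {X : Type*} [MetricSpace X] (g : ℝ → X) (a b : ℝ) : Prop :=
  ∀ s ∈ Set.Icc a b, ∀ t ∈ Set.Icc a b, dist (g s) (g t) = |s - t|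

/-- `x` and `y` are joined by a geodesic. -/
def JoinedByGeodesic {X : Type*} [MetricSpace X] (x y : X) : Prop :=
  ∃ g : ℝ → X, IsUnitGeodesicOn g 0 (dist x y) ∧ g 0 = x ∧ g (dist x y) = y

/-- Cosine of the angle of a triangle in the model surface `S_K` at the vertex between
sides of lengths `a` and `b`, with opposite side of length `c` (law of cosines in `S_K`). -/
def modelCosAngle (K a b c : ℝ) : ℝ :=
  if 0 < K then
    (Real.cos (Real.sqrt K * c) - Real.cos (Real.sqrt K * a) * Real.cos (Real.sqrt K * b)) /
      (Real.sin (Real.sqrt K * a) * Real.sin (Real.sqrt K * b))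
  else if K < 0 then
    (Real.cosh (Real.sqrt (-K) * a) * Real.cosh (Real.sqrt (-K) * b) -
        Real.cosh (Real.sqrt (-K) * c)) /
      (Real.sinh (Real.sqrt (-K) * a) * Real.sinh (Real.sqrt (-K) * b))
  else (a ^ 2 + b ^ 2 - c ^ 2) / (2 * a * b)

/-- Length of the side of a triangle in the model surface `S_K` opposite a vertex whose
angle has cosine `co`, the two adjacent sides having lengths `a`, `b`
(law of cosines in `S_K`). -/
def modelDistOfAngle (K a b co : ℝ) : ℝ :=
  if 0 < K then
    Real.arccos (Real.cos (Real.sqrt K * a) * Real.cos (Real.sqrt K * b) +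
      Real.sin (Real.sqrt K * a) * Real.sin (Real.sqrt K * b) * co) / Real.sqrt K
  else if K < 0 then
    arcosh (Real.cosh (Real.sqrt (-K) * a) * Real.cosh (Real.sqrt (-K) * b) -
      Real.sinh (Real.sqrt (-K) * a) * Real.sinh (Real.sqrt (-K) * b) * co) / Real.sqrt (-K)
  else Real.sqrt (a ^ 2 + b ^ 2 - 2 * a * b * co)

/-- Distance in `S_K` from the comparison point `p̃` to the point at arclength `t` along
the side `q̃ r̃` of the comparison triangle for a triangle with `d(p,q) = pq`,
`d(p,r) = pr`, `d(q,r) = qr`. -/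
def modelSideDist (K pq pr qr t : ℝ) : ℝ :=
  modelDistOfAngle K pq t (modelCosAngle K pq qr pr)

/-- Distance in the model surface `S_K` between the two points with Fermi coordinates
`z = (u₁, d₁)` and `w = (u₂, d₂)` (base parameter along a fixed geodesic, and distance
to that geodesic, both points on the same side). -/
def modelFermiDist (K : ℝ) (z w : ℝ × ℝ) : ℝ :=
  if 0 < K then
    Real.arccos (Real.cos (Real.sqrt K * z.2) * Real.cos (Real.sqrt K * w.2) *
        Real.cos (Real.sqrt K * (z.1 - w.1)) +
      Real.sin (Real.sqrt K * z.2) * Real.sin (Real.sqrt K * w.2)) / Real.sqrt K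
  else if K < 0 then
    arcosh (Real.cosh (Real.sqrt (-K) * z.2) * Real.cosh (Real.sqrt (-K) * w.2) *
        Real.cosh (Real.sqrt (-K) * (z.1 - w.1)) -
      Real.sinh (Real.sqrt (-K) * z.2) * Real.sinh (Real.sqrt (-K) * w.2)) / Real.sqrt (-K)
  else Real.sqrt ((z.1 - w.1) ^ 2 + (z.2 - w.2) ^ 2)

/-- `X` is a CAT(K) space: a complete metric space in which any two points at distance
`< π/√K` are joined by a geodesic (no restriction when `K ≤ 0`), and for every geodesic
triangle of perimeter `< 2π/√K` the distance from a vertex to a point on the opposite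
side is at most the corresponding distance in the comparison triangle in `S_K`
(the standard, equivalent, vertex–side form of the comparison). -/
def CatK (K : ℝ) (X : Type*) [MetricSpace X] : Prop :=
  CompleteSpace X ∧
    (∀ x y : X, (0 < K → dist x y < Real.pi / Real.sqrt K) → JoinedByGeodesic x y) ∧
    ∀ (p q r : X) (g : ℝ → X), IsUnitGeodesicOn g 0 (dist q r) → g 0 = q →
      g (dist q r) = r →
      (0 < K → dist p q + dist q r + dist r p < 2 * Real.pi / Real.sqrt K) →
      ∀ t ∈ Set.Icc 0 (dist q r),
        dist p (g t) ≤ modelSideDist K (dist p q) (dist p r) (dist q r) t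

/-- A set is (geodesically) convex if it contains every geodesic joining two of its
points. -/
def GeodesicConvex {X : Type*} [MetricSpace X] (S : Set X) : Prop :=
  ∀ x ∈ S, ∀ y ∈ S, ∀ g : ℝ → X, IsUnitGeodesicOn g 0 (dist x y) → g 0 = x →
    g (dist x y) = y → ∀ t ∈ Set.Icc 0 (dist x y), g t ∈ S

/-- `X` has curvature bounded above (CBA) by `K`: every point has a convex neighborhood
which (with the induced metric) is a CAT(K) space. -/
def CurvBoundedAbove (K : ℝ) (X : Type*) [MetricSpace X] : Prop :=
  ∀ x : X, ∃ S : Set X, S ∈ nhds x ∧ GeodesicConvex S ∧ CatK K S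

/-- `F` preserves the lengths of curves. -/
def LengthPreserving {N M : Type*} [MetricSpace N] [MetricSpace M] (F : N → M) : Prop :=
  ∀ (γ : ℝ → N) (s : Set ℝ), eVariationOn (F ∘ γ) s = eVariationOn γ s

/-- `X` is an intrinsic (length) metric space: the distance between two points is the
infimum of lengths of curves joining them. -/
def IsLengthSpace (X : Type*) [MetricSpace X] : Prop :=
  ∀ x y : X, edist x y =
    ⨅ (γ : ℝ → X) (_ : ContinuousOn γ (Set.Icc 0 1) ∧ γ 0 = x ∧ γ 1 = y),
      eVariationOn γ (Set.Icc 0 1)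

/-- `N` is a subspace of extrinsic curvature `≤ A` in `M`, via the length-preserving map
`F : N → M`:  `N` is a complete length space and the intrinsic distance `s = d_N` and the
extrinsic distance `r = d_M(F·,F·)` satisfy `s - r ≤ (A²/24) r³ + o(r³)`, uniformly over
all pairs of points with `s` sufficiently small. -/
def SubspaceExtCurvLE {N M : Type*} [MetricSpace N] [MetricSpace M] (A : ℝ)
    (F : N → M) : Prop :=
  CompleteSpace N ∧ IsLengthSpace N ∧ LengthPreserving F ∧
    ∀ ε > 0, ∃ δ > 0, ∀ x y : N, dist x y < δ →
      dist x y - dist (F x) (F y) ≤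
        A ^ 2 / 24 * dist (F x) (F y) ^ 3 + ε * dist (F x) (F y) ^ 3

/-- The induced intrinsic (pseudo)distance on a subset `S` of `M`: the infimum of lengths
of curves in `S` joining the two points. -/
def setIntrinsicEDist {X : Type*} [MetricSpace X] (S : Set X) (x y : X) : ℝ≥0∞ :=
  ⨅ (γ : ℝ → X) (_ : ContinuousOn γ (Set.Icc 0 1) ∧ Set.MapsTo γ (Set.Icc 0 1) S ∧
      γ 0 = x ∧ γ 1 = y),
    eVariationOn γ (Set.Icc 0 1)

/-- A subset `N` of `M` (with its induced intrinsic metric, assumed complete) has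
extrinsic curvature `≤ k` in `M`: the intrinsic distance `s` and extrinsic distance `r`
satisfy `s - r ≤ (k²/24) r³ + o(r³)`, uniformly over pairs with `s` sufficiently small. -/
def SetExtrinsicCurvLE {X : Type*} [MetricSpace X] (k : ℝ) (N : Set X) : Prop :=
  IsComplete N ∧
    ∀ ε > 0, ∃ δ > 0, ∀ x ∈ N, ∀ y ∈ N, setIntrinsicEDist N x y < ENNReal.ofReal δ →
      (setIntrinsicEDist N x y).toReal - dist x y ≤
        k ^ 2 / 24 * dist x y ^ 3 + ε * dist x y ^ 3

/-- `T` is `π`-totally-convex: it contains every geodesic of length `< π` joining pairs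
of its points. -/
def PiTotallyConvex {X : Type*} [MetricSpace X] (T : Set X) : Prop :=
  ∀ (g : ℝ → X) (L : ℝ), 0 ≤ L → L < Real.pi → IsUnitGeodesicOn g 0 L →
    g 0 ∈ T → g L ∈ T → ∀ t ∈ Set.Icc 0 L, g t ∈ T

/-- The defining property of the injectivity radius at `p`, for the radius `ρ`:
for every `ε > 0` there is `δ > 0` such that any two Lipschitz curves from `p` to a
common point `q ∈ B(p,ρ)`, parametrized proportionally to arclength by `[0,1]`, whose
lengths are within `δ` of `d(p,q)`, are `ε`-close in the uniform distance. -/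
def InjPropAt {X : Type*} [MetricSpace X] (p : X) (ρ : ℝ) : Prop :=
  ∀ ε > 0, ∃ δ > 0, ∀ q : X, dist p q < ρ →
    ∀ (γ₁ γ₂ : ℝ → X) (L₁ L₂ : ℝ≥0),
      HasConstantSpeedOnWith γ₁ (Set.Icc 0 1) L₁ → γ₁ 0 = p → γ₁ 1 = q →
        |(L₁ : ℝ) - dist p q| < δ →
      HasConstantSpeedOnWith γ₂ (Set.Icc 0 1) L₂ → γ₂ 0 = p → γ₂ 1 = q →
        |(L₂ : ℝ) - dist p q| < δ →
      ∀ t ∈ Set.Icc (0 : ℝ) 1, dist (γ₁ t) (γ₂ t) ≤ ε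

/-- The injectivity radius at `p`. -/
def injRadAt {X : Type*} [MetricSpace X] (p : X) : ℝ≥0∞ :=
  ⨆ (ρ : ℝ) (_ : InjPropAt p ρ), ENNReal.ofReal ρ

/-- The injectivity radius of `X`. -/
def injRad (X : Type*) [MetricSpace X] : ℝ≥0∞ := ⨅ p : X, injRadAt p

/-- `π/√K`, with the convention that it is `∞` for `K ≤ 0`. -/
def piOverSqrt (K : ℝ) : ℝ≥0∞ :=
  if 0 < K then ENNReal.ofReal (Real.pi / Real.sqrt K) else ⊤

/-- `c(A,K)`: the circumference of a circle of (constant geodesic) curvature `A` in the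
model surface `S_K`.  Such a circle exists iff `A² + K > 0`, in which case its
circumference is `2π/√(A² + K)`; otherwise (the complete `A`-curve being a line,
horocycle or equidistant) the value is `∞` by convention. -/
def modelCircumference (A K : ℝ) : ℝ≥0∞ :=
  if 0 < A ^ 2 + K then ENNReal.ofReal (2 * Real.pi / Real.sqrt (A ^ 2 + K)) else ⊤

/-- The Euclidean comparison angle at `p` subtended by `x`, `y`. -/
def comparisonAngle {X : Type*} [MetricSpace X] (p x y : X) : ℝ :=
  Real.arccos ((dist p x ^ 2 + dist p y ^ 2 - dist x y ^ 2) / (2 * dist p x * dist p y))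

/-- The Alexandrov upper angle between the curves `α` and `β` issuing from the common
point `α 0 = β 0`. -/
def upperAngle {X : Type*} [MetricSpace X] (α β : ℝ → X) : ℝ :=
  Filter.limsup (fun st : ℝ × ℝ => comparisonAngle (α 0) (α st.1) (β st.2))
    ((nhdsWithin (0 : ℝ) (Set.Ioi 0)) ×ˢ (nhdsWithin (0 : ℝ) (Set.Ioi 0)))

/-- A continuous function `f` on `s` is `K`-convex if `f'' ≥ -K f` in the barrier sense:
at every interior point and for every `ε > 0` there is a `C²` lower support function `g`
with `g'' (x) ≥ -K f(x) - ε`. -/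
def IsKConvexOn (K : ℝ) (s : Set ℝ) (f : ℝ → ℝ) : Prop :=
  ContinuousOn f s ∧
    ∀ x ∈ interior s, ∀ ε > 0, ∃ (g : ℝ → ℝ) (δ : ℝ), 0 < δ ∧
      Set.Ioo (x - δ) (x + δ) ⊆ s ∧
      ContDiffOn ℝ 2 g (Set.Ioo (x - δ) (x + δ)) ∧ g x = f x ∧
      (∀ y ∈ Set.Ioo (x - δ) (x + δ), g y ≤ f y) ∧
      -K * f x - ε ≤ deriv (deriv g) x

/-- `γ` is parametrized by arclength on `[a,b]`. -/
def IsArclengthParamOn {X : Type*} [MetricSpace X] (γ : ℝ → X) (a b : ℝ) : Prop :=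
  ∀ s t, a ≤ s → s ≤ t → t ≤ b → eVariationOn γ (Set.Icc s t) = ENNReal.ofReal (t - s)

/-- `γ` (parametrized by arclength on `[0,Λ]`) is a curve of extrinsic curvature `≤ k`:
for subarcs, arclength `s` and chordlength `r` satisfy `s - r ≤ (k²/24) s³ + o(s³)`. -/
def CurveExtCurvLE {X : Type*} [MetricSpace X] (γ : ℝ → X) (Λ k : ℝ) : Prop :=
  IsArclengthParamOn γ 0 Λ ∧
    ∀ ε > 0, ∃ δ > 0, ∀ s t, 0 ≤ s → s ≤ t → t ≤ Λ → t - s < δ →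
      (t - s) - dist (γ s) (γ t) ≤ k ^ 2 / 24 * (t - s) ^ 3 + ε * (t - s) ^ 3

/-- The quadrilateral region in `S_K` (in Fermi coordinates) with top vertices `zp`, `zq`
and bottom vertices their feet on the base geodesic: points over the base segment lying
on or below some geodesic joining `zp` to `zq`. -/
def fermiQuadRegion (K : ℝ) (zp zq : ℝ × ℝ) : Set (ℝ × ℝ) :=
  {z | min zp.1 zq.1 ≤ z.1 ∧ z.1 ≤ max zp.1 zq.1 ∧ 0 ≤ z.2 ∧
    ∃ d', z.2 ≤ d' ∧
      modelFermiDist K zp (z.1, d') + modelFermiDist K (z.1, d') zq =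
        modelFermiDist K zp zq}

/-- `g : [0,1] → M` is a geodesic from `p` to `q` parametrized proportionally to
arclength. -/
def IsGeodesicFromTo {X : Type*} [MetricSpace X] (g : ℝ → X) (p q : X) : Prop :=
  g 0 = p ∧ g 1 = q ∧
    ∀ s ∈ Set.Icc (0:ℝ) 1, ∀ t ∈ Set.Icc (0:ℝ) 1, dist (g s) (g t) = |s - t| * dist p q

section ConstantSpeed

variable {E : Type*}

theorem HasConstantSpeedOnWith.congr [PseudoEMetricSpace E] {f g : ℝ → E} {s : Set ℝ}
    {l : ℝ≥0} (hf : HasConstantSpeedOnWith f s l) (h : EqOn f g s) :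
    HasConstantSpeedOnWith g s l := fun _ hx _ hy => by
  rw [← eVariationOn.eq_of_eqOn (h.mono inter_subset_left), hf hx hy]

theorem HasConstantSpeedOnWith.comp_mul_add [PseudoEMetricSpace E] {f : ℝ → E} {l l' : ℝ≥0}
    {c k a b a' b' : ℝ} (hc : 0 ≤ c) (hf : HasConstantSpeedOnWith f (Icc a' b') l)
    (ha : c * a + k = a') (hb : c * b + k = b') (hl' : (l' : ℝ) = c * l) :
    HasConstantSpeedOnWith (fun t => f (c * t + k)) (Icc a b) l' := by
  rcases hc.eq_or_lt with rfl | hc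
  · rw [zero_mul, NNReal.coe_eq_zero] at hl'
    subst hl'
    exact hasConstantSpeedOnWith_zero_iff.2 fun _ _ _ _ => by simp
  subst ha hb
  rw [hasConstantSpeedOnWith_iff_ordered]
  intro x hx y hy hxy
  have hφ : MonotoneOn (fun t => c * t + k) (Icc a b) := fun u _ v _ huv => by
    dsimp only; gcongr
  have := eVariationOn.comp_inter_Icc_eq_of_monotoneOn f _ hφ hx hy
  rw [image_affine_Icc' hc] at this
  rw [show (fun t => f (c * t + k)) = f ∘ fun t => c * t + k from rfl, this,
    hf (hφ.mapsTo_Icc hx) (hφ.mapsTo_Icc hy), hl']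
  congr 1
  ring

theorem HasConstantSpeedOnWith.dist_le [PseudoMetricSpace E] {f : ℝ → E} {s : Set ℝ}
    {l : ℝ≥0} (hf : HasConstantSpeedOnWith f s l) {x y : ℝ} (hx : x ∈ s) (hy : y ∈ s)
    (hxy : x ≤ y) : dist (f x) (f y) ≤ l * (y - x) := by
  have h := eVariationOn.edist_le f (s := s ∩ Icc x y) ⟨hx, le_rfl, hxy⟩ ⟨hy, hxy, le_rfl⟩
  rwa [hf hx hy, edist_dist,
    ENNReal.ofReal_le_ofReal_iff (mul_nonneg l.coe_nonneg (sub_nonneg.2 hxy))] at h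

theorem hasConstantSpeedOnWith_of_dist_eq [PseudoMetricSpace E] {f : ℝ → E} {s : Set ℝ}
    {l : ℝ≥0} (h : ∀ x ∈ s, ∀ y ∈ s, dist (f x) (f y) = |x - y| * l) :
    HasConstantSpeedOnWith f s l := by
  rw [hasConstantSpeedOnWith_iff_ordered]
  intro x hx y hy hxy
  apply le_antisymm
  · have hlip : LipschitzOnWith l f s := LipschitzOnWith.of_dist_le_mul fun u hu v hv => by
      rw [h u hu v hv, Real.dist_eq, mul_comm]
    calc eVariationOn f (s ∩ Icc x y) = eVariationOn (f ∘ id) (s ∩ Icc x y) := rfl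
      _ ≤ l * eVariationOn id (s ∩ Icc x y) :=
        hlip.comp_eVariationOn_le fun _ hu => hu.1
      _ = ENNReal.ofReal (l * (y - x)) := by
        rw [eVariationOn_id hx hy, ENNReal.ofReal_mul l.coe_nonneg, ENNReal.ofReal_coe_nnreal]
  · calc ENNReal.ofReal (l * (y - x)) = edist (f x) (f y) := by
          rw [edist_dist, h x hx y hy, abs_sub_comm, abs_of_nonneg (sub_nonneg.2 hxy), mul_comm]
      _ ≤ eVariationOn f (s ∩ Icc x y) :=
        eVariationOn.edist_le f ⟨hx, le_rfl, hxy⟩ ⟨hy, hxy, le_rfl⟩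

end ConstantSpeed

section Arclength

variable {α E : Type*} [LinearOrder α] [TopologicalSpace α] [OrderTopology α]

theorem continuousOn_variationOnFromTo [PseudoMetricSpace E] {f : α → E} {s : Set α}
    (hf : LocallyBoundedVariationOn f s) (hc : ContinuousOn f s) {a : α} (ha : a ∈ s) :
    ContinuousOn (variationOnFromTo f s a) s := by
  intro b hb
  have hleft : ContinuousWithinAt (variationOnFromTo f s a) (s ∩ Iio b) b := by
    have := variationOnFromTo.tendsto_left ha hb hf ((hc b hb).mono inter_subset_left)
    rwa [dist_self, sub_zero] at this
  have hright : ContinuousWithinAt (variationOnFromTo f s a) (s ∩ Ioi b) b := by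
    have := variationOnFromTo.tendsto_right ha hb hf ((hc b hb).mono inter_subset_left)
    rwa [dist_self, add_zero] at this
  refine ((hleft.union hright).union continuousWithinAt_singleton).mono fun x hx => ?_
  rcases lt_trichotomy x b with h | rfl | h
  exacts [Or.inl (Or.inl ⟨hx, h⟩), Or.inr rfl, Or.inl (Or.inr ⟨hx, h⟩)]

theorem ContinuousOn.exists_hasConstantSpeedOnWith [MetricSpace E] {f : ℝ → E}
    (hc : ContinuousOn f (Icc 0 1)) (hf : BoundedVariationOn f (Icc 0 1)) :
    ∃ γ : ℝ → E, HasConstantSpeedOnWith γ (Icc 0 1) (eVariationOn f (Icc 0 1)).toNNReal ∧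
      γ 0 = f 0 ∧ γ 1 = f 1 := by
  have h0 : (0 : ℝ) ∈ Icc 0 1 := left_mem_Icc.2 zero_le_one
  have h1 : (1 : ℝ) ∈ Icc 0 1 := right_mem_Icc.2 zero_le_one
  set ψ := variationOnFromTo f (Icc 0 1) 0
  set L := (eVariationOn f (Icc 0 1)).toNNReal
  have hψ1 : ψ 1 = L := by
    simp [ψ, L, variationOnFromTo.eq_of_le f _ zero_le_one, ENNReal.coe_toNNReal_eq_toReal]
  have hψ0 : ψ 0 = 0 := variationOnFromTo.self f _ 0
  have hmono := variationOnFromTo.monotoneOn hf.locallyBoundedVariationOn h0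
  have himage : ψ '' Icc 0 1 = Icc 0 (L : ℝ) := by
    refine Subset.antisymm ?_ ?_
    · rintro _ ⟨t, ht, rfl⟩
      exact ⟨hψ0 ▸ hmono h0 ht ht.1, hψ1 ▸ hmono ht h1 ht.2⟩
    · have : Icc (ψ 0) (ψ 1) ⊆ ψ '' Icc 0 1 := intermediate_value_Icc zero_le_one
        (continuousOn_variationOnFromTo hf.locallyBoundedVariationOn hc h0)
      rwa [hψ0, hψ1] at this
  set NP := naturalParameterization f (Icc 0 1) 0
  have hNP : HasConstantSpeedOnWith NP (Icc 0 L) 1 := by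
    rw [← himage]
    exact has_unit_speed_naturalParameterization f hf.locallyBoundedVariationOn h0
  have hNP_eq {b : ℝ} (hb : b ∈ Icc 0 1) : NP (ψ b) = f b :=
    edist_eq_zero.1 (edist_naturalParameterization_eq_zero hf.locallyBoundedVariationOn h0 hb)
  refine ⟨fun t => NP (L * t + 0),
    hNP.comp_mul_add L.coe_nonneg (by simp) (by simp) (mul_one _).symm, ?_, ?_⟩
  · simpa [hψ0] using hNP_eq h0
  · simpa [hψ1] using hNP_eq h1

end Arclength

section Concat

variable {E : Type*} {f₁ f₂ : ℝ → E}

def curveConcat (f₁ f₂ : ℝ → E) (c : ℝ) : ℝ → E :=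
  fun t => if t ≤ c then f₁ (t / c) else f₂ ((t - c) / (1 - c))

theorem curveConcat_zero {c : ℝ} (hc : 0 ≤ c) : curveConcat f₁ f₂ c 0 = f₁ 0 := by
  simp [curveConcat, hc]

theorem curveConcat_one {c : ℝ} (hc : c < 1) : curveConcat f₁ f₂ c 1 = f₂ 1 := by
  simp [curveConcat, hc.not_ge, sub_ne_zero.2 hc.ne']

variable {l₁ l₂ : ℝ≥0}

theorem HasConstantSpeedOnWith.curveConcat [PseudoEMetricSpace E]
    (h₁ : HasConstantSpeedOnWith f₁ (Icc 0 1) l₁) (h₂ : HasConstantSpeedOnWith f₂ (Icc 0 1) l₂)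
    (hl₁ : 0 < l₁) (hl₂ : 0 < l₂) (h : f₁ 1 = f₂ 0) :
    HasConstantSpeedOnWith (curveConcat f₁ f₂ (l₁ / (l₁ + l₂))) (Icc 0 1) (l₁ + l₂) := by
  set c : ℝ := l₁ / (l₁ + l₂)
  have hl : (0 : ℝ) < l₁ + l₂ := by positivity
  have hc : 0 < c := by positivity
  have hc1 : 1 - c = l₂ / (l₁ + l₂) := by rw [one_sub_div hl.ne', add_sub_cancel_left]
  have hc1' : 0 < 1 - c := by rw [hc1]; positivity
  apply HasConstantSpeedOnWith.Icc_Icc (y := c)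
  · refine (h₁.comp_mul_add (k := 0) (a := 0) (b := c) (inv_pos.2 hc).le (by simp)
      (by field_simp; simp) ?_).congr fun t ht => ?_
    · simp only [c]; push_cast; field_simp
    · simp [_root_.curveConcat, ht.2, div_eq_inv_mul]
  · refine (h₂.comp_mul_add (k := -c / (1 - c)) (a := c) (b := 1) (inv_pos.2 hc1').le
      (by field_simp; ring) (by field_simp; ring) ?_).congr fun t ht => ?_
    · rw [hc1]; push_cast; field_simp
    · rcases ht.1.eq_or_lt with rfl | hct
      · simp [_root_.curveConcat, hc.ne', h, neg_div, ← div_eq_inv_mul]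
      · simp only [_root_.curveConcat, hct.not_ge, if_false]
        congr 1
        field_simp
        ring

theorem dist_curveConcat_le [PseudoMetricSpace E]
    (h₁ : HasConstantSpeedOnWith f₁ (Icc 0 1) l₁) (h₂ : HasConstantSpeedOnWith f₂ (Icc 0 1) l₂)
    (hl₁ : 0 < l₁) (hl₂ : 0 < l₂) (h : f₁ 1 = f₂ 0) {t : ℝ} (ht : t ∈ Icc (0 : ℝ) 1) :
    dist (curveConcat f₁ f₂ (l₁ / (l₁ + l₂)) t) (f₁ t) ≤ 2 * l₂ := by
  set c : ℝ := l₁ / (l₁ + l₂)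
  have hl : (0 : ℝ) < l₁ + l₂ := by positivity
  have hc : 0 < c := by positivity
  have hc1 : 1 - c = l₂ / (l₁ + l₂) := by rw [one_sub_div hl.ne', add_sub_cancel_left]
  have hc1' : 0 < 1 - c := by rw [hc1]; positivity
  simp only [_root_.curveConcat]
  split_ifs with htc
  · have hts : t ≤ t / c := le_div_self ht.1 hc (by linarith)
    calc dist (f₁ (t / c)) (f₁ t) = dist (f₁ t) (f₁ (t / c)) := dist_comm _ _
      _ ≤ l₁ * (t / c - t) :=
        h₁.dist_le ht ⟨ht.1.trans hts, (div_le_one hc).2 htc⟩ hts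
      _ = t * l₂ := by simp only [c]; field_simp; ring
      _ ≤ 2 * l₂ := by nlinarith [ht.2, l₂.coe_nonneg]
  · replace htc := not_le.1 htc
    set s := (t - c) / (1 - c)
    have hs : s ∈ Icc (0 : ℝ) 1 :=
      ⟨div_nonneg (by linarith) hc1'.le, (div_le_one hc1').2 (by linarith [ht.2])⟩
    calc dist (f₂ s) (f₁ t) ≤ dist (f₂ 0) (f₂ s) + dist (f₁ t) (f₁ 1) := by
          rw [← h, dist_comm (f₁ 1), dist_comm (f₁ t)]; exact dist_triangle _ _ _
      _ ≤ l₂ * (s - 0) + l₁ * (1 - t) :=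
          add_le_add (h₂.dist_le (left_mem_Icc.2 zero_le_one) hs hs.1)
            (h₁.dist_le ht (right_mem_Icc.2 zero_le_one) ht.2)
      _ ≤ l₂ * 1 + l₁ * (1 - c) := by gcongr; linarith [hs.2]
      _ ≤ l₂ + l₂ := by
          rw [mul_one, hc1, mul_div_assoc']
          gcongr
          rw [div_le_iff₀ hl]
          nlinarith [l₁.coe_nonneg, l₂.coe_nonneg]
      _ = 2 * l₂ := by ring

end Concat

section LengthSpace

variable {X : Type*} [MetricSpace X]

theorem IsLengthSpace.exists_hasConstantSpeedOnWith (hlen : IsLengthSpace X) (x y : X)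
    {η : ℝ} (hη : 0 < η) :
    ∃ (γ : ℝ → X) (L : ℝ≥0), HasConstantSpeedOnWith γ (Icc 0 1) L ∧ γ 0 = x ∧ γ 1 = y ∧
      (L : ℝ) < dist x y + η := by
  have hlt : edist x y < edist x y + ENNReal.ofReal η :=
    ENNReal.lt_add_right (edist_ne_top x y) (by simpa using hη)
  rw [hlen x y] at hlt
  nth_rewrite 2 [← hlen x y] at hlt
  obtain ⟨f, hf⟩ := iInf_lt_iff.1 hlt
  obtain ⟨⟨hc, rfl, rfl⟩, hflen⟩ := iInf_lt_iff.1 hf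
  have hbv : BoundedVariationOn f (Icc 0 1) := hflen.ne_top
  obtain ⟨γ, hγ, hγ0, hγ1⟩ := hc.exists_hasConstantSpeedOnWith hbv
  refine ⟨γ, _, hγ, hγ0, hγ1, ?_⟩
  rw [ENNReal.coe_toNNReal_eq_toReal, ← ENNReal.toReal_ofReal (add_nonneg dist_nonneg hη.le),
    ENNReal.ofReal_add dist_nonneg hη.le, ← edist_dist]
  exact (ENNReal.toReal_lt_toReal hbv (by finiteness)).2 hflen

end LengthSpace

section Geodesic

variable {X : Type*} [MetricSpace X] {g : ℝ → X} {p q : X}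

theorem IsGeodesicFromTo.hasConstantSpeedOnWith (hg : IsGeodesicFromTo g p q) :
    HasConstantSpeedOnWith g (Icc 0 1) (nndist p q) :=
  hasConstantSpeedOnWith_of_dist_eq fun s hs t ht => by rw [hg.2.2 s hs t ht, coe_nndist]

theorem IsGeodesicFromTo.dist_left (hg : IsGeodesicFromTo g p q) {t : ℝ}
    (ht : t ∈ Icc (0 : ℝ) 1) : dist p (g t) = t * dist p q := by
  rw [← hg.1, hg.2.2 0 (left_mem_Icc.2 zero_le_one) t ht, hg.1, zero_sub, abs_neg,
    abs_of_nonneg ht.1]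

theorem IsGeodesicFromTo.of_dist_le (h0 : g 0 = p) (h1 : g 1 = q)
    (h : ∀ u ∈ Icc (0 : ℝ) 1, ∀ v ∈ Icc (0 : ℝ) 1, u ≤ v →
      dist (g u) (g v) ≤ dist p q * (v - u)) :
    IsGeodesicFromTo g p q := by
  have hI0 : (0 : ℝ) ∈ Icc 0 1 := left_mem_Icc.2 zero_le_one
  have hI1 : (1 : ℝ) ∈ Icc 0 1 := right_mem_Icc.2 zero_le_one
  have key : ∀ u ∈ Icc (0 : ℝ) 1, ∀ v ∈ Icc (0 : ℝ) 1, u ≤ v →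
      dist (g u) (g v) = (v - u) * dist p q := by
    intro u hu v hv huv
    have hpu := h 0 hI0 u hu hu.1
    have hvq := h v hv 1 hI1 hv.2
    rw [h0] at hpu
    rw [h1] at hvq
    have := dist_triangle4 p (g u) (g v) q
    linarith [h u hu v hv huv]
  refine ⟨h0, h1, fun s hs t ht => ?_⟩
  rcases le_total s t with hst | hts
  · rw [key s hs t ht hst, abs_sub_comm, abs_of_nonneg (sub_nonneg.2 hst)]
  · rw [dist_comm, key t ht s hs hts, abs_of_nonneg (sub_nonneg.2 hts)]

end Geodesic

namespace InjPropAt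

variable {X : Type*} [MetricSpace X] {p : X} {ρ : ℝ}

theorem of_ofReal_lt_injRadAt (h : ENNReal.ofReal ρ < injRadAt p) : InjPropAt p ρ := by
  simp only [injRadAt, lt_iSup_iff] at h
  obtain ⟨ρ', hρ', hlt⟩ := h
  have hρρ' : ρ < ρ' := (ENNReal.ofReal_lt_ofReal_iff'.1 hlt).1
  intro ε hε
  obtain ⟨δ, hδ, hP⟩ := hρ' ε hε
  exact ⟨δ, hδ, fun q hq => hP q (hq.trans hρρ')⟩

theorem eqOn_of_isGeodesicFromTo (hInj : InjPropAt p ρ) {q : X} (hq : dist p q < ρ)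
    {g₁ g₂ : ℝ → X} (h₁ : IsGeodesicFromTo g₁ p q) (h₂ : IsGeodesicFromTo g₂ p q) :
    EqOn g₁ g₂ (Icc 0 1) := by
  intro t ht
  refine dist_le_zero.1 (le_of_forall_pos_le_add fun ε hε => ?_)
  obtain ⟨δ, hδ, hP⟩ := hInj ε hε
  have hlen : |(nndist p q : ℝ) - dist p q| < δ := by simpa using hδ
  rw [zero_add]
  exact hP q hq g₁ g₂ _ _ h₁.hasConstantSpeedOnWith h₁.1 h₁.2.1 hlen
    h₂.hasConstantSpeedOnWith h₂.1 h₂.2.1 hlen t ht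

theorem exists_isGeodesicFromTo [CompleteSpace X] (hlen : IsLengthSpace X)
    (hInj : InjPropAt p ρ) {q : X} (hq : dist p q < ρ) : ∃ g : ℝ → X, IsGeodesicFromTo g p q := by
  have hI0 : (0 : ℝ) ∈ Icc 0 1 := left_mem_Icc.2 zero_le_one
  have hI1 : (1 : ℝ) ∈ Icc 0 1 := right_mem_Icc.2 zero_le_one
  choose c L hc hc0 hc1 hL using fun n : ℕ =>
    hlen.exists_hasConstantSpeedOnWith p q (Nat.one_div_pos_of_nat (n := n))
  have hL_tendsto : Tendsto (fun n => (L n : ℝ)) atTop (𝓝 (dist p q)) := by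
    refine tendsto_of_tendsto_of_tendsto_of_le_of_le tendsto_const_nhds
      (by simpa using tendsto_one_div_add_atTop_nhds_zero_nat.const_add (dist p q))
      (fun n => ?_) fun n => (hL n).le
    simpa [hc0, hc1] using (hc n).dist_le hI0 hI1 zero_le_one
  have hcauchy : ∀ t ∈ Icc (0 : ℝ) 1, CauchySeq fun n => c n t := by
    intro t ht
    refine Metric.cauchySeq_iff.2 fun ε hε => ?_
    obtain ⟨δ, hδ, hP⟩ := hInj (ε / 2) (half_pos hε)
    obtain ⟨N, hN⟩ := Metric.tendsto_atTop.1 hL_tendsto δ hδ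
    refine ⟨N, fun m hm n hn => ?_⟩
    have := hP q hq (c m) (c n) (L m) (L n) (hc m) (hc0 m) (hc1 m) (hN m hm) (hc n) (hc0 n)
      (hc1 n) (hN n hn) t ht
    linarith
  have : Nonempty X := ⟨p⟩
  have hlim : ∀ t ∈ Icc (0 : ℝ) 1,
      Tendsto (fun n => c n t) atTop (𝓝 (limUnder atTop fun n => c n t)) :=
    fun t ht => (hcauchy t ht).tendsto_limUnder
  refine ⟨fun t => limUnder atTop fun n => c n t,
    IsGeodesicFromTo.of_dist_le ?_ ?_ fun u hu v hv huv => ?_⟩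
  · exact tendsto_nhds_unique (hlim 0 hI0) (by simp [hc0])
  · exact tendsto_nhds_unique (hlim 1 hI1) (by simp [hc1])
  · exact le_of_tendsto_of_tendsto' ((hlim u hu).dist (hlim v hv))
      (hL_tendsto.mul_const (v - u)) fun n => (hc n).dist_le hu hv huv

theorem exists_dist_le_of_isGeodesicFromTo (hlen : IsLengthSpace X) (hInj : InjPropAt p ρ)
    {q : X} (hq : dist p q < ρ) {ε : ℝ} (hε : 0 < ε) :
    ∃ δ > 0, ∀ q' : X, dist q q' < δ → ∀ g g' : ℝ → X, IsGeodesicFromTo g p q →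
      IsGeodesicFromTo g' p q' → ∀ t ∈ Icc (0 : ℝ) 1, dist (g t) (g' t) ≤ ε := by
  obtain ⟨δ₀, hδ₀, hP⟩ := hInj (ε / 2) (half_pos hε)
  set δ := min (δ₀ / 4) (ε / 8)
  have hδδ₀ : δ ≤ δ₀ / 4 := min_le_left _ _
  have hδε : δ ≤ ε / 8 := min_le_right _ _
  refine ⟨δ, by positivity, fun q' hqq' g g' hg hg' t ht => ?_⟩
  rcases eq_or_ne q' q with rfl | hq'q
  · rw [hInj.eqOn_of_isGeodesicFromTo hq hg hg' ht, dist_self]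
    exact hε.le
  rcases eq_or_ne p q' with rfl | hpq'
  · calc dist (g t) (g' t) ≤ dist p (g t) + dist p (g' t) := dist_triangle_left _ _ _
      _ = t * dist p q := by rw [hg.dist_left ht, hg'.dist_left ht, dist_self, mul_zero, add_zero]
      _ ≤ ε := by nlinarith [ht.1, ht.2, dist_nonneg (x := p) (y := q), dist_comm q p]
  obtain ⟨σ, Lσ, hσ, hσ0, hσ1, hLσ⟩ :=
    hlen.exists_hasConstantSpeedOnWith q' q (by positivity : 0 < δ)
  have hLσpos : 0 < Lσ := by
    have := hσ.dist_le (left_mem_Icc.2 zero_le_one) (right_mem_Icc.2 zero_le_one) zero_le_one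
    rw [hσ0, hσ1, sub_zero, mul_one] at this
    exact_mod_cast (dist_pos.2 hq'q).trans_le this
  have hd'pos : 0 < nndist p q' := NNReal.coe_pos.1 (dist_pos.2 hpq')
  set γ := curveConcat g' σ (nndist p q' / (nndist p q' + Lσ))
  have hγ := hg'.hasConstantSpeedOnWith.curveConcat hσ hd'pos hLσpos (hg'.2.1.trans hσ0.symm)
  have hγ0 : γ 0 = p := (curveConcat_zero (by positivity)).trans hg'.1
  have hγ1 : γ 1 = q :=
    (curveConcat_one ((div_lt_one (by positivity)).2 (by simpa using hLσpos))).trans hσ1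
  have hγlen : |((nndist p q' + Lσ : ℝ≥0) : ℝ) - dist p q| < δ₀ := by
    push_cast
    rw [abs_lt]
    constructor <;> linarith [dist_triangle p q q', dist_triangle p q' q, dist_comm q q']
  have hgγ := hP q hq g γ _ _ hg.hasConstantSpeedOnWith hg.1 hg.2.1 (by simpa using hδ₀)
    hγ hγ0 hγ1 hγlen t ht
  have hγg' := dist_curveConcat_le hg'.hasConstantSpeedOnWith hσ hd'pos hLσpos
    (hg'.2.1.trans hσ0.symm) ht
  linarith [dist_triangle (g t) (γ t) (g' t), dist_comm q q']

end InjPropAt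

/-- **Radial uniqueness** (§5.1).  Let `M` be a complete inner (length) metric space,
`p ∈ M` and `ρ < inj_{M,p}`.  Then the open ball `B(p,ρ)` possesses radial uniqueness:
every `q ∈ B(p,ρ)` is joined to `p` by a unique geodesic, and this geodesic (parametrized
proportionally to arclength by `[0,1]`) varies continuously with `q` in the uniform
distance. -/
theorem radial_uniqueness {M : Type*} [MetricSpace M] [CompleteSpace M]
    (hlen : IsLengthSpace M) (p : M) (ρ : ℝ) (hρ : ENNReal.ofReal ρ < injRadAt p) :
    ∃ G : M → ℝ → M, ∀ q : M, dist p q < ρ →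
      IsGeodesicFromTo (G q) p q ∧
      (∀ g : ℝ → M, IsGeodesicFromTo g p q → Set.EqOn g (G q) (Set.Icc 0 1)) ∧
      ∀ ε > 0, ∃ δ > 0, ∀ q' : M, dist p q' < ρ → dist q q' < δ →
        ∀ t ∈ Set.Icc (0:ℝ) 1, dist (G q t) (G q' t) ≤ ε := by
  have hInj := InjPropAt.of_ofReal_lt_injRadAt hρ
  have hex (q : M) : ∃ g : ℝ → M, dist p q < ρ → IsGeodesicFromTo g p q := by
    by_cases hq : dist p q < ρ
    · exact (hInj.exists_isGeodesicFromTo hlen hq).imp fun _ hg _ => hg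
    · exact ⟨fun _ => p, fun h => absurd h hq⟩
  choose G hG using hex
  refine ⟨G, fun q hq => ⟨hG q hq, fun g hg => hInj.eqOn_of_isGeodesicFromTo hq hg (hG q hq),
    fun ε hε => ?_⟩⟩
  obtain ⟨δ, hδ, hclose⟩ := hInj.exists_dist_le_of_isGeodesicFromTo hlen hq hε
  exact ⟨δ, hδ, fun q' hq' hqq' => hclose q' hqq' _ _ (hG q hq) (hG q' hq')⟩

end
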